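/- arXiv:1310.5292 — 2 statements merged into one kernel-verified Lean document; each statement's English description precedes it below -/
import Mathlib

section
/- Let G be a connected graph on n ≥ 2 vertices. For real α, with (^α 𝕄)_i = (Σ_j d_{ij}𝔻_jᵅ)/𝔻_iᵅ ordered nonincreasingly and T = min_{i≠j} d_{ij}𝔻_jᵅ/𝔻_iᵅ, one has ρ(𝔻(G)) ≥ ((^α 𝕄)_n − T + √(((^α 𝕄)_n + T)² + 4T·Σ_{k=1}^{n−1}((^α 𝕄)_k − (^α 𝕄)_n)))/2. -/
open Matrix Finset Real

/-- Spectral radius: largest modulus of a complex eigenvalue (root of the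
characteristic polynomial). -/
noncomputable def specRad {n : ℕ} (A : Matrix (Fin n) (Fin n) ℝ) : ℝ :=
  (((A.map (Complex.ofReal)).charpoly.roots).map (fun z => ‖z‖)).foldr max 0

/-- Irreducibility of a nonnegative matrix. -/
def Irred {n : ℕ} (A : Matrix (Fin n) (Fin n) ℝ) : Prop :=
  ∀ i j : Fin n, ∃ k : ℕ, 0 < (A ^ k) i j

/-!
Write `P i = D i ^ α`, `m = min 𝕄` and `S = ∑ (𝕄_k - m)`. Then `(𝔻 P)_i = 𝕄_i P_i`, and
`T P_i ≤ d_ij P_j` off the diagonal, so the positive vector `w_j = P_j (1 + (𝕄_j - m)/(f + T))`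
satisfies `(𝔻 w)_i ≥ 𝕄_i P_i + T P_i (S - (𝕄_i - m))/(f + T)`. The right-hand side is exactly
`f w_i` when `f² - (m - T) f - T (m + S) = 0`; for `f` the larger root, `𝔻 w ≥ f w` entrywise, so
the Rayleigh quotient of `w`, hence the largest eigenvalue of the symmetric matrix `𝔻`, is `≥ f`.
-/

theorem Multiset.le_foldr_max {α : Type*} [LinearOrder α] {s : Multiset α} {a : α} (b : α)
    (ha : a ∈ s) : a ≤ s.foldr max b := by
  induction s using Quotient.inductionOn
  exact List.le_max_of_le' b ha le_rfl

theorem abs_le_specRad_of_mem_spectrum {n : ℕ} {A : Matrix (Fin n) (Fin n) ℝ} {μ : ℝ}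
    (hμ : μ ∈ spectrum ℝ A) : |μ| ≤ specRad A := by
  have hroot : μ ∈ A.charpoly.roots :=
    (Polynomial.mem_roots A.charpoly_monic.ne_zero).mpr (mem_spectrum_iff_isRoot_charpoly.mp hμ)
  have hrootℂ : (μ : ℂ) ∈ (A.map Complex.ofReal).charpoly.roots := by
    rw [show A.map Complex.ofReal = A.map Complex.ofRealHom from rfl, charpoly_map]
    exact Multiset.subset_of_le (Polynomial.map_roots_le_of_injective _ (RingHom.injective _))
      (Multiset.mem_map_of_mem _ hroot)
  have := Multiset.le_foldr_max 0 (Multiset.mem_map_of_mem (fun z : ℂ => ‖z‖) hrootℂ)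
  rwa [Complex.norm_real, norm_eq_abs] at this

theorem Matrix.IsHermitian.exists_mem_spectrum_ge_of_mul_dotProduct_le {ι : Type*} [Fintype ι]
    [DecidableEq ι] {A : Matrix ι ι ℝ} (hA : A.IsHermitian) {w : ι → ℝ} (hw : w ≠ 0) {f : ℝ}
    (h : f * (w ⬝ᵥ w) ≤ w ⬝ᵥ (A *ᵥ w)) : ∃ μ ∈ spectrum ℝ A, f ≤ μ := by
  set T := toEuclideanLin A
  have hT : T.IsSymmetric := isSymmetric_toEuclideanLin_iff.mpr hA
  set x : EuclideanSpace ℝ ι := WithLp.toLp 2 w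
  have hx : x ≠ 0 := by simpa [x] using hw
  have : Nontrivial (EuclideanSpace ℝ ι) := ⟨⟨x, 0, hx⟩⟩
  set rayleigh := fun y : {y : EuclideanSpace ℝ ι // y ≠ 0} =>
    RCLike.re (inner ℝ (T y) (y : EuclideanSpace ℝ ι)) / ‖(y : EuclideanSpace ℝ ι)‖ ^ 2
  have hbdd : BddAbove (Set.range rayleigh) :=
    ⟨‖LinearMap.toContinuousLinearMap T‖, by
      rintro _ ⟨y, rfl⟩
      exact (le_abs_self _).trans (T.toContinuousLinearMap.rayleighQuotient_le_norm y)⟩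
  refine ⟨⨆ y, rayleigh y, ?_, le_trans ?_ (le_ciSup hbdd ⟨x, hx⟩)⟩
  · rw [← spectrum_toLpLin 2]
    exact Module.End.hasEigenvalue_iff_mem_spectrum.mp hT.hasEigenvalue_iSup_of_finiteDimensional
  · have hxx : ‖x‖ ^ 2 = w ⬝ᵥ w := by
      rw [← real_inner_self_eq_norm_sq, EuclideanSpace.inner_toLp_toLp, star_trivial]
    have hTx : inner ℝ (T x) x = w ⬝ᵥ (A *ᵥ w) := by
      simp only [T, x, toLpLin_toLp, toLin'_apply, EuclideanSpace.inner_toLp_toLp, star_trivial]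
    simp only [rayleigh, RCLike.re_to_real, hTx, hxx]
    rw [le_div_iff₀ (by rw [← hxx]; positivity)]
    exact h

section TestVector

variable {ι : Type*} [Fintype ι] {d : Matrix ι ι ℝ} {P M : ι → ℝ} {T m f : ℝ}

theorem mul_sum_sub_le_sum_mul_sub [DecidableEq ι] {i : ι} (hdiag : 0 ≤ d i i) (hP : 0 ≤ P i)
    (hT : ∀ j, j ≠ i → T * P i ≤ d i j * P j) (hm : ∀ j, m ≤ M j) :
    T * P i * (∑ j, (M j - m) - (M i - m)) ≤ ∑ j, d i j * P j * (M j - m) := by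
  rw [← add_sum_erase _ _ (mem_univ i), ← add_sum_erase _ _ (mem_univ i), add_sub_cancel_left,
    mul_sum]
  refine le_add_of_nonneg_of_le (mul_nonneg (mul_nonneg hdiag hP) (sub_nonneg.2 (hm i)))
    (sum_le_sum fun j hj => ?_)
  exact mul_le_mul_of_nonneg_right (hT j (ne_of_mem_erase hj)) (sub_nonneg.2 (hm j))

theorem mul_le_mulVec_of_quadratic_eq_zero [DecidableEq ι] (hdiag : ∀ i, 0 ≤ d i i)
    (hP : ∀ i, 0 ≤ P i) (hM : ∀ i, (d *ᵥ P) i = M i * P i)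
    (hT : ∀ i j, i ≠ j → T * P i ≤ d i j * P j) (hm : ∀ j, m ≤ M j) (hfT : 0 < f + T)
    (hf : f ^ 2 - f * (m - T) - T * (m + ∑ k, (M k - m)) = 0) (i : ι) :
    f * (P i * (1 + (M i - m) / (f + T))) ≤
      (d *ᵥ fun j => P j * (1 + (M j - m) / (f + T))) i := by
  have hexpand : (d *ᵥ fun j => P j * (1 + (M j - m) / (f + T))) i =
      M i * P i + (∑ j, d i j * P j * (M j - m)) / (f + T) := by
    rw [← hM i, mulVec, mulVec, dotProduct, dotProduct, sum_div, ← sum_add_distrib]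
    exact sum_congr rfl fun j _ => by field_simp
  have hfw : f * (P i * (1 + (M i - m) / (f + T))) =
      M i * P i + T * P i * (∑ j, (M j - m) - (M i - m)) / (f + T) := by
    field_simp
    linear_combination P i * hf
  rw [hexpand, hfw]
  gcongr
  exact mul_sum_sub_le_sum_mul_sub (hdiag i) (hP i) (fun j hj => hT i j hj.symm) hm

end TestVector

theorem le_specRad_of_mul_le_mulVec {n : ℕ} {A : Matrix (Fin n) (Fin n) ℝ} (hA : A.IsHermitian)
    {w : Fin n → ℝ} (hw₀ : ∀ i, 0 ≤ w i) (hw : w ≠ 0) {f : ℝ} (h : ∀ i, f * w i ≤ (A *ᵥ w) i) :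
    f ≤ specRad A := by
  have hrayleigh : f * (w ⬝ᵥ w) ≤ w ⬝ᵥ (A *ᵥ w) := by
    rw [dotProduct, dotProduct, mul_sum]
    exact sum_le_sum fun i _ => by
      rw [mul_left_comm]; exact mul_le_mul_of_nonneg_left (h i) (hw₀ i)
  obtain ⟨μ, hμ, hfμ⟩ := hA.exists_mem_spectrum_ge_of_mul_dotProduct_le hw hrayleigh
  exact hfμ.trans ((le_abs_self μ).trans (abs_le_specRad_of_mem_spectrum hμ))

theorem le_specRad_of_transmission_bounds {n : ℕ} [NeZero n] {d : Matrix (Fin n) (Fin n) ℝ}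
    (hd : d.IsHermitian) (hdiag : ∀ i, 0 ≤ d i i) {P M : Fin n → ℝ} (hP : ∀ i, 0 < P i)
    (hM : ∀ i, (d *ᵥ P) i = M i * P i) {T m : ℝ} (hT₀ : 0 < T)
    (hT : ∀ i j, i ≠ j → T * P i ≤ d i j * P j) (hm : ∀ j, m ≤ M j) (hm₀ : 0 ≤ m) :
    (m - T + √((m + T) ^ 2 + 4 * T * ∑ k, (M k - m))) / 2 ≤ specRad d := by
  set S := ∑ k, (M k - m)
  have hS : 0 ≤ S := sum_nonneg fun k _ => sub_nonneg.2 (hm k)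
  set R := √((m + T) ^ 2 + 4 * T * S)
  have hR : R ^ 2 = (m + T) ^ 2 + 4 * T * S := sq_sqrt (by positivity)
  have hR₀ : 0 ≤ R := sqrt_nonneg _
  set f := (m - T + R) / 2
  have hfT : 0 < f + T := by simp only [f]; linarith
  have hf : f ^ 2 - f * (m - T) - T * (m + S) = 0 := by simp only [f]; linear_combination hR / 4
  have hw : ∀ i, 0 < P i * (1 + (M i - m) / (f + T)) := fun i =>
    mul_pos (hP i) (by linarith [div_nonneg (sub_nonneg.2 (hm i)) hfT.le])
  exact le_specRad_of_mul_le_mulVec hd (fun i => (hw i).le) (fun h0 => (hw 0).ne' (congrFun h0 0))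
    (mul_le_mulVec_of_quadratic_eq_zero hdiag (fun i => (hP i).le) hM hT hm hfT hf)

theorem stmt_15 {n : ℕ} (hn : 2 ≤ n) (G : SimpleGraph (Fin n)) (hconn : G.Connected)
    (α : ℝ) (D : Fin n → ℝ) (hD : ∀ i, D i = ∑ j, (G.dist i j : ℝ))
    (𝕄 : Fin n → ℝ)
    (h𝕄 : ∀ i, 𝕄 i = (∑ j, (G.dist i j : ℝ) * (D j) ^ α) / (D i) ^ α)
    (hord : ∀ i j : Fin n, i ≤ j → 𝕄 j ≤ 𝕄 i)
    (T : ℝ)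
    (hT : IsLeast {x | ∃ i j : Fin n, i ≠ j ∧ x = (G.dist i j : ℝ) * (D j) ^ α / (D i) ^ α} T) :
    specRad (Matrix.of fun i j : Fin n => (G.dist i j : ℝ)) ≥
      (𝕄 ⟨n - 1, by omega⟩ - T +
        Real.sqrt ((𝕄 ⟨n - 1, by omega⟩ + T) ^ 2 +
          4 * T * ∑ k ∈ Finset.Iio (⟨n - 1, by omega⟩ : Fin n),
            (𝕄 k - 𝕄 ⟨n - 1, by omega⟩))) / 2 := by
  have : NeZero n := ⟨by omega⟩
  have : Nontrivial (Fin n) := Fin.nontrivial_iff_two_le.2 hn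
  set N : Fin n := ⟨n - 1, by omega⟩
  have hleN : ∀ k : Fin n, k ≤ N := fun k => Fin.le_def.2 (by simp only [N]; omega)
  have hdist : ∀ i j, i ≠ j → (0 : ℝ) < G.dist i j := fun i j h => mod_cast hconn.pos_dist_of_ne h
  have hP : ∀ i, 0 < D i ^ α := fun i => by
    obtain ⟨j, hj⟩ := exists_ne i
    have hDi : 0 < D i :=
      hD i ▸ sum_pos' (fun k _ => by positivity) ⟨j, mem_univ j, hdist i j hj.symm⟩
    exact rpow_pos_of_pos hDi α
  have hsum : ∑ k ∈ Iio N, (𝕄 k - 𝕄 N) = ∑ k, (𝕄 k - 𝕄 N) :=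
    sum_subset (subset_univ _) fun k _ hk => by
      rw [(hleN k).eq_of_not_lt (by simpa using hk), sub_self]
  rw [ge_iff_le, hsum]
  refine le_specRad_of_transmission_bounds (P := fun i => D i ^ α) ?_ (fun i => by simp) hP
    (fun i => ?_) ?_ (fun i j hij => ?_) (fun j => hord j N (hleN j)) ?_
  · exact IsHermitian.ext fun i j => by simp [SimpleGraph.dist_comm]
  · rw [h𝕄 i, div_mul_cancel₀ _ (hP i).ne']; rfl
  · obtain ⟨i, j, hij, rfl⟩ := hT.1
    exact div_pos (mul_pos (hdist i j hij) (hP j)) (hP i)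
  · exact (le_div_iff₀ (hP i)).1 (hT.2 ⟨i, j, hij, rfl⟩)
  · rw [h𝕄 N]
    exact div_nonneg (sum_nonneg fun j _ => mul_nonneg (by positivity) (hP j).le) (hP N).le
end

section
/- Let G be a connected graph on n ≥ 2 vertices with transmissions 𝔻₁ ≥ ... ≥ 𝔻_n and diameter d. Then the distance signless Laplacian spectral radius satisfies ρ(𝔻ℚ(G)) ≤ (𝔻₁ + 2𝔻_i − d + √((2𝔻_i − 𝔻₁ + d)² + 8d·Σ_{k=1}^{i−1}(𝔻_k − 𝔻_i)))/2 for each 1 ≤ i ≤ n. -/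
open Matrix Finset Real

/-! A positive vector `z` with `B z ≤ θ z` entrywise bounds the spectral radius of a nonnegative
matrix `B` by `θ`: for an eigenvector `x`, compare both sides at a coordinate maximising
`‖x j‖ / z j`. For `𝔻ℚ(G)` take `z w = c + 2 (𝔻_w - 𝔻_i)⁺`. As distances vanish on the diagonal
and are at most `d`, all row inequalities follow once `c = θ - 𝔻₁ + d > 0` and
`(θ - 2 𝔻_i) (θ - 𝔻₁ + d) = 2 d ∑_{k < i} (𝔻_k - 𝔻_i)`; the bound of the theorem is the larger
root `θ` of this quadratic. -/

lemma Multiset.foldr_max_le {α : Type*} [LinearOrder α] {s : Multiset α} {b a : α} (hb : b ≤ a)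
    (h : ∀ x ∈ s, x ≤ a) : s.foldr max b ≤ a :=
  Multiset.foldr_induction max b (· ≤ a) s (fun _ _ => max_le) hb h

lemma Matrix.exists_mulVec_eq_smul_of_mem_roots_charpoly {ι K : Type*} [Fintype ι]
    [DecidableEq ι] [Field K] {A : Matrix ι ι K} {t : K} (ht : t ∈ A.charpoly.roots) :
    ∃ x ≠ 0, A *ᵥ x = t • x := by
  have hspec : t ∈ spectrum K A.toLin' := by
    rw [spectrum_toLin']
    exact mem_spectrum_of_isRoot_charpoly (Polynomial.isRoot_of_mem_roots ht)
  obtain ⟨x, hx⟩ := (Module.End.hasEigenvalue_iff_mem_spectrum.mpr hspec).exists_hasEigenvector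
  exact ⟨x, hx.2, by simpa using Module.End.mem_eigenspace_iff.mp hx.1⟩

lemma norm_le_of_mulVec_eq_smul {ι : Type*} [Fintype ι] {B : Matrix ι ι ℝ}
    (hB : ∀ i j, 0 ≤ B i j) {z : ι → ℝ} (hz : ∀ i, 0 < z i) {θ : ℝ} (hBz : B *ᵥ z ≤ θ • z)
    {x : ι → ℂ} (hx : x ≠ 0) {t : ℂ} (hBx : B.map Complex.ofReal *ᵥ x = t • x) : ‖t‖ ≤ θ := by
  obtain ⟨j₀, hj₀⟩ := Function.ne_iff.mp hx
  obtain ⟨u, -, hu⟩ := Finset.exists_max_image univ (fun j => ‖x j‖ / z j) ⟨j₀, mem_univ _⟩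
  set r := ‖x u‖ / z u
  have hr : 0 < r := (div_pos (norm_pos_iff.mpr hj₀) (hz j₀)).trans_le (hu j₀ (mem_univ _))
  have hxu : ‖x u‖ = r * z u := (div_mul_cancel₀ _ (hz u).ne').symm
  have hx_le (j : ι) : ‖x j‖ ≤ r * z j := (div_le_iff₀ (hz j)).mp (hu j (mem_univ _))
  have key : ‖t‖ * ‖x u‖ ≤ θ * ‖x u‖ := calc
    ‖t‖ * ‖x u‖ = ‖∑ j, (B u j : ℂ) * x j‖ := by
      rw [← norm_mul, ← smul_eq_mul, ← Pi.smul_apply, ← hBx]; rfl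
    _ ≤ ∑ j, B u j * ‖x j‖ := by
      refine (norm_sum_le _ _).trans_eq (Finset.sum_congr rfl fun j _ => ?_)
      rw [norm_mul, Complex.norm_real, Real.norm_of_nonneg (hB u j)]
    _ ≤ ∑ j, B u j * (r * z j) :=
      Finset.sum_le_sum fun j _ => mul_le_mul_of_nonneg_left (hx_le j) (hB u j)
    _ = r * (B *ᵥ z) u := by
      simp only [mulVec, dotProduct, Finset.mul_sum]; exact Finset.sum_congr rfl fun j _ => by ring
    _ ≤ r * (θ * z u) := mul_le_mul_of_nonneg_left (hBz u) hr.le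
    _ = θ * ‖x u‖ := by rw [hxu]; ring
  exact le_of_mul_le_mul_right key (hxu ▸ mul_pos hr (hz u))

lemma specRad_le_of_mulVec_le {n : ℕ} {B : Matrix (Fin n) (Fin n) ℝ} (hB : ∀ i j, 0 ≤ B i j)
    {z : Fin n → ℝ} (hz : ∀ i, 0 < z i) {θ : ℝ} (hθ : 0 ≤ θ) (hBz : B *ᵥ z ≤ θ • z) :
    specRad B ≤ θ := by
  refine Multiset.foldr_max_le hθ fun r hr => ?_
  obtain ⟨t, ht, rfl⟩ := Multiset.mem_map.mp hr
  obtain ⟨x, hx, hBx⟩ := exists_mulVec_eq_smul_of_mem_roots_charpoly ht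
  exact norm_le_of_mulVec_eq_smul hB hz hBz hx hBx

lemma sum_posPart_sub_eq_sum_Iio {ι β : Type*} [Fintype ι] [LinearOrder ι]
    [LocallyFiniteOrderBot ι] [AddCommGroup β] [LinearOrder β] [IsOrderedAddMonoid β]
    {D : ι → β} (hD : Antitone D) (i : ι) :
    ∑ w, (D w - D i)⁺ = ∑ k ∈ Iio i, (D k - D i) := by
  rw [← Finset.sum_subset (subset_univ (Iio i)) fun w _ hw => ?_]
  · exact Finset.sum_congr rfl fun k hk =>
      posPart_eq_self.mpr (sub_nonneg.mpr (hD (mem_Iio.mp hk).le))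
  · exact posPart_eq_zero.mpr (sub_nonpos.mpr (hD (not_lt.mp (mem_Iio.not.mp hw))))

lemma sum_mul_le_mul_sum_sub {ι : Type*} [Fintype ι] [DecidableEq ι] {a p : ι → ℝ} {d : ℝ}
    {u : ι} (hau : a u = 0) (had : ∀ w, a w ≤ d) (hp : ∀ w, 0 ≤ p w) :
    ∑ w, a w * p w ≤ d * (∑ w, p w - p u) := by
  rw [← Finset.add_sum_erase _ _ (mem_univ u), ← Finset.add_sum_erase _ p (mem_univ u), hau,
    zero_mul, zero_add, add_sub_cancel_left, Finset.mul_sum]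
  exact Finset.sum_le_sum fun w _ => mul_le_mul_of_nonneg_right (had w) (hp w)

theorem specRad_diagonal_add_le {n : ℕ} {A : Matrix (Fin n) (Fin n) ℝ} {d : ℝ} (hd : 0 < d)
    (hA : ∀ u w, 0 ≤ A u w) (hAd : ∀ u w, A u w ≤ d) (hAu : ∀ u, A u u = 0)
    {D : Fin n → ℝ} (hD : ∀ u, D u = ∑ w, A u w) (hanti : Antitone D)
    {m : Fin n} (hm : IsBot m) (i : Fin n) :
    specRad (diagonal D + A) ≤
      (D m + 2 * D i - d + √((2 * D i - D m + d) ^ 2 + 8 * d * ∑ k ∈ Iio i, (D k - D i))) / 2 := by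
  set S := ∑ k ∈ Iio i, (D k - D i)
  set E := 2 * D i - D m + d
  set R := √(E ^ 2 + 8 * d * S)
  set θ := (D m + 2 * D i - d + R) / 2
  set p : Fin n → ℝ := fun w => (D w - D i)⁺
  have hpS : ∑ w, p w = S := sum_posPart_sub_eq_sum_Iio hanti i
  have hS : 0 ≤ S := hpS ▸ Finset.sum_nonneg fun w _ => posPart_nonneg _
  have hDmS : D m - D i ≤ S :=
    (le_posPart _).trans
      (hpS ▸ Finset.single_le_sum (f := p) (fun w _ => posPart_nonneg _) (mem_univ m))
  have hDnn (u : Fin n) : 0 ≤ D u := hD u ▸ Finset.sum_nonneg fun w _ => hA u w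
  have hR : R ^ 2 = E ^ 2 + 8 * d * S := sq_sqrt (by nlinarith [sq_nonneg E])
  have hER : |E| ≤ R := abs_le_sqrt (by nlinarith)
  set c := θ - D m + d
  have hcE : 2 * c = R + E := by simp only [c, θ, E]; ring
  have hθE : 2 * (θ - 2 * D i) = R - E := by simp only [θ, E]; ring
  have hθ : 2 * D i ≤ θ := by linarith [le_abs_self E]
  have hc : 0 < c := by
    -- otherwise `R = -E`, so `S = 0`, so `D m = D i` and `E > 0`
    by_contra! hc
    have : 8 * d * S ≤ 0 := by nlinarith [neg_abs_le E, abs_nonneg E]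
    have : D m ≤ D i := by nlinarith
    linarith [hDnn i, le_abs_self E]
  have hcθ : c * (θ - 2 * D i) = 2 * d * S := by nlinarith
  refine specRad_le_of_mulVec_le (z := fun w => c + 2 * p w) (fun u w => ?_)
    (fun w => by positivity) (by linarith [hDnn i]) fun u => ?_
  · rcases eq_or_ne u w with rfl | huw
    · simpa [hAu] using hDnn u
    · simpa [diagonal_apply_ne _ huw] using hA u w
  · have hrow : ∑ w, A u w * p w ≤ d * (S - p u) :=
      hpS ▸ sum_mul_le_mul_sum_sub (hAu u) (hAd u) fun w => posPart_nonneg _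
    have hAz : (A *ᵥ fun w => c + 2 * p w) u = c * D u + 2 * ∑ w, A u w * p w := by
      simp only [mulVec, dotProduct, mul_add, Finset.sum_add_distrib, hD u, Finset.mul_sum]
      congr 1 <;> exact Finset.sum_congr rfl fun w _ => by ring
    have hpu : D u - D i ≤ p u := le_posPart _
    have hpu0 : 0 ≤ p u := posPart_nonneg _
    have hDu : D u ≤ D m := hanti (hm u)
    simp only [add_mulVec, mulVec_diagonal, Pi.add_apply, Pi.smul_apply, smul_eq_mul, hAz]
    nlinarith [mul_nonneg hc.le (by linarith : 0 ≤ D i - D u + p u),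
      mul_nonneg hpu0 (sub_nonneg.mpr hDu)]

theorem stmt_16 {n : ℕ} (hn : 2 ≤ n) (G : SimpleGraph (Fin n)) (hconn : G.Connected)
    (D : Fin n → ℝ) (hD : ∀ i, D i = ∑ j, (G.dist i j : ℝ))
    (hord : ∀ i j : Fin n, i ≤ j → D j ≤ D i)
    (d : ℕ) (hd : IsGreatest {k | ∃ i j : Fin n, k = G.dist i j} d) :
    ∀ i : Fin n,
      specRad (Matrix.diagonal D + Matrix.of fun i j : Fin n => (G.dist i j : ℝ)) ≤
        (D (⟨0, by omega⟩ : Fin n) + 2 * D i - (d : ℝ) +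
          Real.sqrt ((2 * D i - D (⟨0, by omega⟩ : Fin n) + (d : ℝ)) ^ 2 +
            8 * (d : ℝ) * ∑ k ∈ Finset.Iio i, (D k - D i))) / 2 := by
  have hdist_le (u w : Fin n) : G.dist u w ≤ d := hd.2 ⟨u, w, rfl⟩
  have hd_pos : (0 : ℝ) < d := by
    have h01 : (⟨0, by omega⟩ : Fin n) ≠ ⟨1, by omega⟩ := by simp
    exact_mod_cast (hconn.pos_dist_of_ne h01).trans_le (hdist_le _ _)
  exact specRad_diagonal_add_le hd_pos (fun _ _ => Nat.cast_nonneg _)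
    (fun u w => Nat.cast_le.mpr (hdist_le u w)) (fun u => by simp) hD
    (fun i j h => hord i j h) (fun k => Nat.zero_le k.val)
end
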